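/- Let (Ω, F, P) be a probability space and T : Ω → Ω an invertible transformation such that both T and T^{-1} are measurable and measure-preserving, and T is ergodic. Let R : Ω → ℝ be integrable with E[R] < 0, and let b : Ω → [0,∞) be measurable and tempered (log⁺ b(T^n ω)/|n| → 0 as n → ±∞, almost surely). Let d_m, N_m : Ω → [0,∞) (m ∈ ℕ) be measurable with: (i) for every m ≥ 1 and almost every ω, d_m(ω) ≤ N_m(ω) + exp(R(T^{m−1} ω)) · d_{m−1}(ω); (ii) N_m(ω) ≤ b(T^m ω) for all m and ω; (iii) N_m → 0 in probability as m → ∞. Then d_m → 0 in probability as m → ∞. -/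

import Mathlib

/-!
Put `S = T⁻¹` and compare `d m` with `d m ∘ S^[m]`, which has the same law. Along this
substitution the recursion becomes a cocycle recursion driven by `R ∘ S` and unrolls to
`d m (S^[m] ω) ≤ ∑_{k<m} W k ω · N (m-k) (S^[m] ω) + W m ω · d 0 (S^[m] ω)` with
`W k = exp (R ∘ S + … + R ∘ S^[k])`. Since `S` is ergodic and `E[R] < 0`, the maximal ergodic
theorem bounds these Birkhoff sums by `C + k E[R] / 2`, and temperedness of `b` gives
`b (S^[k] ω) ≤ C' e^{-k E[R] / 4}`; so `W k` and `b (S^[k] ·) W k` are at most `A q^k` with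
`q = e^{E[R] / 4} < 1` and `A` a.s. finite. As `N (m-k) (S^[m] ω) ≤ b (S^[k] ω)`, the terms with
`k ≥ n` contribute at most `A q^n / (1 - q)`, while the finitely many terms with `k < n` and the
last term tend to `0` in probability.
-/

open MeasureTheory Filter Topology Finset Real

namespace MeasureTheory

section InMeasure

variable {α ι : Type*} [MeasurableSpace α] {μ : Measure α} {l : Filter ι}

theorem tendstoInMeasure_zero_iff_abs {f : ι → α → ℝ} :
    TendstoInMeasure μ f l 0 ↔
      ∀ δ, 0 < δ → Tendsto (fun i => μ {x | δ ≤ |f i x|}) l (𝓝 0) := by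
  simp only [tendstoInMeasure_iff_dist, Pi.zero_apply, Real.dist_eq, sub_zero]

theorem tendstoInMeasure_zero_iff_of_nonneg {f : ι → α → ℝ} (hf : ∀ i x, 0 ≤ f i x) :
    TendstoInMeasure μ f l 0 ↔
      ∀ δ, 0 < δ → Tendsto (fun i => μ {x | δ ≤ f i x}) l (𝓝 0) := by
  simp only [tendstoInMeasure_zero_iff_abs, abs_of_nonneg (hf _ _)]

theorem tendstoInMeasure_const {c : ι → ℝ} (hc : Tendsto c l (𝓝 0)) :
    TendstoInMeasure μ (fun i (_ : α) => c i) l 0 := by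
  refine tendstoInMeasure_zero_iff_abs.2 fun δ hδ => tendsto_const_nhds.congr' ?_
  filter_upwards [(hc.abs.eventually (gt_mem_nhds (by simpa using hδ)))] with i hi
  simp [not_le.2 (by simpa using hi : |c i| < δ)]

theorem tendstoInMeasure_comp_iff {φ : ι → α → α} (hφ : ∀ i, MeasurePreserving (φ i) μ μ)
    {f : ι → α → ℝ} (hf : ∀ i, Measurable (f i)) :
    TendstoInMeasure μ (fun i x => f i (φ i x)) l 0 ↔ TendstoInMeasure μ f l 0 := by
  simp only [tendstoInMeasure_zero_iff_abs]
  refine forall₂_congr fun δ _ => tendsto_congr fun i => ?_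
  exact (hφ i).measure_preimage
    (measurableSet_le measurable_const (hf i).abs).nullMeasurableSet

theorem TendstoInMeasure.add {f g : ι → α → ℝ} {F G : α → ℝ} (hf : TendstoInMeasure μ f l F)
    (hg : TendstoInMeasure μ g l G) : TendstoInMeasure μ (f + g) l (F + G) := by
  rw [tendstoInMeasure_iff_dist] at hf hg ⊢
  intro δ hδ
  refine tendsto_of_tendsto_of_tendsto_of_le_of_le tendsto_const_nhds
    (by simpa using (hf (δ / 2) (half_pos hδ)).add (hg (δ / 2) (half_pos hδ)))
    (fun _ => zero_le) fun i => (measure_mono fun x hx => ?_).trans (measure_union_le _ _)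
  by_contra h
  simp only [Set.mem_union, Set.mem_ofPred_eq, not_or, not_le, Pi.add_apply] at h hx
  linarith [dist_add_add_le (f i x) (g i x) (F x) (G x)]

theorem tendstoInMeasure_finset_sum {κ : Type*} {s : Finset κ} {f : κ → ι → α → ℝ}
    (hf : ∀ k ∈ s, TendstoInMeasure μ (f k) l 0) :
    TendstoInMeasure μ (fun i x => ∑ k ∈ s, f k i x) l 0 := by
  classical
  induction s using Finset.induction_on with
  | empty => simpa using tendstoInMeasure_const (μ := μ) (tendsto_const_nhds (x := (0 : ℝ)))
  | insert k s hk ih =>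
    simp only [Finset.sum_insert hk]
    have h := (hf k (mem_insert_self k s)).add (ih fun j hj => hf j (mem_insert_of_mem hj))
    rw [add_zero] at h
    exact h

theorem tendsto_measure_le_abs_atTop [IsFiniteMeasure μ] {A : α → ℝ} (hA : AEMeasurable A μ) :
    Tendsto (fun M : ℕ => μ {x | (M : ℝ) ≤ |A x|}) atTop (𝓝 0) := by
  have h := tendsto_measure_iInter_atTop (μ := μ) (s := fun M : ℕ => {x | (M : ℝ) ≤ |A x|})
    (fun M => nullMeasurableSet_le aemeasurable_const hA.abs)
    (fun M₁ M₂ h x (hx : (M₂ : ℝ) ≤ _) => le_trans (by exact_mod_cast h) hx) ⟨0, measure_ne_top μ _⟩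
  have hempty : (⋂ M : ℕ, {x | (M : ℝ) ≤ |A x|}) = ∅ :=
    Set.eq_empty_of_forall_notMem fun x hx =>
      let ⟨M, hM⟩ := exists_nat_gt |A x|
      (Set.mem_iInter.1 hx M).not_gt hM
  rwa [hempty, measure_empty] at h

theorem TendstoInMeasure.mul_left [IsFiniteMeasure μ] {A : α → ℝ} (hA : AEMeasurable A μ)
    {f : ι → α → ℝ} (hf : TendstoInMeasure μ f l 0) :
    TendstoInMeasure μ (fun i x => A x * f i x) l 0 := by
  rw [tendstoInMeasure_zero_iff_abs] at hf ⊢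
  intro δ hδ
  rw [ENNReal.tendsto_nhds_zero]
  intro ε hε
  obtain ⟨M, hM, hM1⟩ := ((ENNReal.tendsto_nhds_zero.1 (tendsto_measure_le_abs_atTop hA) (ε / 2)
    (ENNReal.half_pos hε.ne')).and (eventually_ge_atTop 1)).exists
  have hMpos : (0 : ℝ) < M := by exact_mod_cast hM1
  filter_upwards [ENNReal.tendsto_nhds_zero.1 (hf (δ / M) (by positivity)) (ε / 2)
    (ENNReal.half_pos hε.ne')] with i hi
  calc μ {x | δ ≤ |A x * f i x|}
      ≤ μ ({x | (M : ℝ) ≤ |A x|} ∪ {x | δ / M ≤ |f i x|}) := measure_mono fun x hx => by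
        by_contra h
        simp only [Set.mem_union, Set.mem_ofPred_eq, not_or, not_le] at h hx
        rw [lt_div_iff₀ hMpos, mul_comm] at h
        rw [abs_mul] at hx
        nlinarith [abs_nonneg (f i x)]
    _ ≤ μ {x | (M : ℝ) ≤ |A x|} + μ {x | δ / M ≤ |f i x|} := measure_union_le _ _
    _ ≤ ε / 2 + ε / 2 := add_le_add hM hi
    _ = ε := ENNReal.add_halves ε

theorem tendstoInMeasure_of_abs_le_add {X : ι → α → ℝ} {U : ℕ → ι → α → ℝ} {V : ℕ → α → ℝ}
    (hU : ∀ n, TendstoInMeasure μ (U n) l 0) (hV : TendstoInMeasure μ V atTop 0)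
    (hle : ∀ n, ∀ᶠ i in l, ∀ᵐ x ∂μ, |X i x| ≤ |U n i x| + |V n x|) :
    TendstoInMeasure μ X l 0 := by
  simp only [tendstoInMeasure_zero_iff_abs] at hU hV ⊢
  intro δ hδ
  rw [ENNReal.tendsto_nhds_zero]
  intro ε hε
  obtain ⟨n, hn⟩ := (ENNReal.tendsto_nhds_zero.1 (hV (δ / 2) (half_pos hδ)) (ε / 2)
    (ENNReal.half_pos hε.ne')).exists
  filter_upwards [ENNReal.tendsto_nhds_zero.1 (hU n (δ / 2) (half_pos hδ)) (ε / 2)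
    (ENNReal.half_pos hε.ne'), hle n] with i hi hXi
  calc μ {x | δ ≤ |X i x|}
      ≤ μ ({x | δ / 2 ≤ |U n i x|} ∪ {x | δ / 2 ≤ |V n x|}) := measure_mono_ae <| by
        filter_upwards [hXi] with x hx (hδx : δ ≤ |X i x|)
        show x ∈ {x | δ / 2 ≤ |U n i x|} ∪ {x | δ / 2 ≤ |V n x|}
        by_contra h
        simp only [Set.mem_union, Set.mem_ofPred_eq, not_or, not_le] at h
        linarith
    _ ≤ μ {x | δ / 2 ≤ |U n i x|} + μ {x | δ / 2 ≤ |V n x|} := measure_union_le _ _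
    _ ≤ ε / 2 + ε / 2 := add_le_add hi hn
    _ = ε := ENNReal.add_halves ε

end InMeasure

end MeasureTheory

section MaximalErgodic

variable {α : Type*} {f : α → α} {g : α → ℝ}

/-- `birkhoffMax f g n x = max (0, S₁ x, …, Sₙ x)`, where `Sₖ = birkhoffSum f g k`. -/
noncomputable def birkhoffMax (f : α → α) (g : α → ℝ) : ℕ → α → ℝ
  | 0 => 0
  | n + 1 => fun x => max 0 (g x + birkhoffMax f g n (f x))

theorem birkhoffMax_nonneg : ∀ n x, 0 ≤ birkhoffMax f g n x
  | 0, _ => le_rfl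
  | _ + 1, _ => le_max_left _ _

theorem birkhoffMax_le_succ : ∀ n x, birkhoffMax f g n x ≤ birkhoffMax f g (n + 1) x
  | 0, x => birkhoffMax_nonneg 1 x
  | n + 1, x => max_le_max le_rfl (add_le_add le_rfl (birkhoffMax_le_succ n (f x)))

theorem birkhoffSum_le_birkhoffMax : ∀ n x, birkhoffSum f g n x ≤ birkhoffMax f g n x
  | 0, x => by simp [birkhoffMax]
  | n + 1, x => by
    rw [birkhoffSum_succ']
    exact (add_le_add le_rfl (birkhoffSum_le_birkhoffMax n (f x))).trans (le_max_right _ _)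

theorem birkhoffMax_le_add_comp {n : ℕ} {x : α} (hx : 0 < birkhoffMax f g n x) :
    birkhoffMax f g n x ≤ g x + birkhoffMax f g n (f x) := by
  cases n with
  | zero => exact absurd hx (lt_irrefl 0)
  | succ n =>
    have hmax : birkhoffMax f g (n + 1) x = g x + birkhoffMax f g n (f x) :=
      (max_choice _ _).resolve_left fun h => by simp_all [birkhoffMax]
    rw [hmax]
    exact add_le_add le_rfl (birkhoffMax_le_succ n (f x))

theorem bddAbove_range_birkhoffSum_apply_iff {x : α} :
    BddAbove (Set.range fun n => birkhoffSum f g n (f x)) ↔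
      BddAbove (Set.range fun n => birkhoffSum f g n x) := by
  simp only [bddAbove_def, Set.forall_mem_range]
  constructor
  · rintro ⟨C, hC⟩
    refine ⟨max 0 (g x + C), fun n => ?_⟩
    cases n with
    | zero => simp
    | succ n =>
      exact (birkhoffSum_succ' f g n x ▸ add_le_add le_rfl (hC n)).trans (le_max_right _ _)
  · rintro ⟨C, hC⟩
    refine ⟨C - g x, fun n => ?_⟩
    linarith [birkhoffSum_succ' f g n x, hC (n + 1)]

variable [MeasurableSpace α] {μ : Measure α}

theorem measurable_birkhoffMax (hf : Measurable f) (hg : Measurable g) :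
    ∀ n, Measurable (birkhoffMax f g n)
  | 0 => measurable_const
  | n + 1 => measurable_const.max (hg.add ((measurable_birkhoffMax hf hg n).comp hf))

theorem integrable_birkhoffMax (hf : MeasurePreserving f μ μ) (hg : Integrable g μ) :
    ∀ n, Integrable (birkhoffMax f g n) μ
  | 0 => integrable_zero _ _ _
  | n + 1 => by
    have h := hg.add (hf.integrable_comp_of_integrable (integrable_birkhoffMax hf hg n))
    simpa [birkhoffMax, max_comm (0 : ℝ)] using h.pos_part

/-- Garsia's maximal ergodic theorem. -/
theorem setIntegral_birkhoffMax_pos_nonneg (hf : MeasurePreserving f μ μ) (hgm : Measurable g)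
    (hg : Integrable g μ) (n : ℕ) :
    0 ≤ ∫ x in {x | 0 < birkhoffMax f g n x}, g x ∂μ := by
  set M := birkhoffMax f g n
  have hM : Integrable M μ := integrable_birkhoffMax hf hg n
  have hMf : Integrable (fun x => M (f x)) μ := hf.integrable_comp_of_integrable hM
  have hA : MeasurableSet {x | 0 < M x} :=
    measurableSet_lt measurable_const (measurable_birkhoffMax hf.measurable hgm n)
  -- `M` vanishes off `{0 < M}`, so `∫ (M - M ∘ f) = 0` is at most the integral over `{0 < M}`.
  calc (0 : ℝ) = ∫ x, (M x - M (f x)) ∂μ := by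
        rw [integral_sub hM hMf,
          ← integral_map hf.aemeasurable (by rw [hf.map_eq]; exact hM.1), hf.map_eq, sub_self]
    _ ≤ ∫ x in {x | 0 < M x}, (M x - M (f x)) ∂μ := by
        rw [← integral_add_compl hA (f := fun x => M x - M (f x)) (hM.sub hMf)]
        refine add_le_of_nonpos_right (setIntegral_nonpos hA.compl fun x hx => ?_)
        rw [(birkhoffMax_nonneg n x).antisymm (not_lt.1 hx)]
        linarith [birkhoffMax_nonneg (f := f) (g := g) n (f x)]
    _ ≤ ∫ x in {x | 0 < M x}, g x ∂μ :=
        setIntegral_mono_on (hM.sub hMf).integrableOn hg.integrableOn hA fun x hx => by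
          linarith [birkhoffMax_le_add_comp (f := f) (g := g) hx]

theorem Ergodic.ae_bddAbove_birkhoffSum [IsProbabilityMeasure μ] (hf : Ergodic f μ)
    (hgm : Measurable g) (hg : Integrable g μ) (hneg : ∫ x, g x ∂μ < 0) :
    ∀ᵐ x ∂μ, BddAbove (Set.range fun n => birkhoffSum f g n x) := by
  have hA : MeasurableSet {x | BddAbove (Set.range fun n => birkhoffSum f g n x)} :=
    measurableSet_bddAbove_range fun n =>
      Finset.measurable_sum _ fun k _ => hgm.comp (hf.measurable.iterate k)
  refine (hf.ae_mem_or_ae_notMem hA (Set.ext fun x => bddAbove_range_birkhoffSum_apply_iff)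
    ).resolve_right fun hunb => hneg.not_ge ?_
  -- If the sums are a.e. unbounded, the sets `{0 < birkhoffMax f g n}` exhaust `α` up to a null
  -- set, and the maximal ergodic theorem forces `∫ g ≥ 0`.
  set B : ℕ → Set α := fun n => {x | 0 < birkhoffMax f g n x}
  have hB : ∀ n, MeasurableSet (B n) := fun n =>
    measurableSet_lt measurable_const (measurable_birkhoffMax hf.measurable hgm n)
  have hBmono : Monotone B :=
    monotone_nat_of_le_succ fun n x hx => hx.trans_le (birkhoffMax_le_succ n x)
  have hae : ∀ᵐ x ∂μ, x ∈ ⋃ n, B n := by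
    filter_upwards [hunb] with x hx
    simp only [bddAbove_def, Set.forall_mem_range, not_exists, not_forall, not_le] at hx
    obtain ⟨n, hn⟩ := hx 0
    exact Set.mem_iUnion.2 ⟨n, hn.trans_le (birkhoffSum_le_birkhoffMax n x)⟩
  rw [← setIntegral_eq_integral_of_ae_compl_eq_zero (hae.mono fun x hx hx' => absurd hx hx')]
  exact ge_of_tendsto' (tendsto_setIntegral_of_monotone hB hBmono hg.integrableOn)
    (setIntegral_birkhoffMax_pos_nonneg hf.toMeasurePreserving hgm hg)

theorem Ergodic.ae_exists_birkhoffSum_le_add_mul [IsProbabilityMeasure μ] (hf : Ergodic f μ)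
    (hg : Integrable g μ) {c : ℝ} (hc : ∫ x, g x ∂μ < c) :
    ∀ᵐ x ∂μ, ∃ C, ∀ n, birkhoffSum f g n x ≤ C + n * c := by
  set g₀ := hg.1.mk g
  have hg₀ : Integrable g₀ μ := hg.congr hg.1.ae_eq_mk
  have hneg : ∫ x, (g₀ x - c) ∂μ < 0 := by
    rw [integral_sub hg₀ (integrable_const c), ← integral_congr_ae hg.1.ae_eq_mk]
    simpa using hc
  have heq : ∀ᵐ x ∂μ, ∀ n, birkhoffSum f g n x = birkhoffSum f g₀ n x := ae_all_iff.2 fun n =>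
    hf.quasiMeasurePreserving.birkhoffSum_ae_eq_of_ae_eq hg.1.ae_eq_mk n
  filter_upwards [hf.ae_bddAbove_birkhoffSum (hg.1.stronglyMeasurable_mk.measurable.sub
    measurable_const) (hg₀.sub (integrable_const c)) hneg, heq] with x ⟨C, hC⟩ hx
  refine ⟨C, fun n => ?_⟩
  have hn : birkhoffSum f (fun x => g₀ x - c) n x ≤ C := hC (Set.mem_range_self n)
  simp only [birkhoffSum, Finset.sum_sub_distrib, Finset.sum_const, Finset.card_range,
    nsmul_eq_mul] at hn
  rw [hx n, birkhoffSum]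
  linarith

end MaximalErgodic

theorem le_sum_exp_birkhoffSum_mul {α : Type*} {f : α → α} {r : α → ℝ} {e u : ℕ → α → ℝ}
    {s : Set α} (hs : Set.MapsTo f s s)
    (hrec : ∀ m, ∀ y ∈ s, e (m + 1) y ≤ u (m + 1) y + exp (r y) * e m (f y)) :
    ∀ m, ∀ x ∈ s, e m x ≤ ∑ k ∈ range m, exp (birkhoffSum f r k x) * u (m - k) (f^[k] x)
      + exp (birkhoffSum f r m x) * e 0 (f^[m] x) := by
  intro m
  induction m with
  | zero => simp
  | succ m ih =>
    intro x hx
    calc e (m + 1) x ≤ u (m + 1) x + exp (r x) * e m (f x) := hrec m x hx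
      _ ≤ u (m + 1) x + exp (r x) * (∑ k ∈ range m, exp (birkhoffSum f r k (f x)) *
            u (m - k) (f^[k] (f x)) + exp (birkhoffSum f r m (f x)) * e 0 (f^[m] (f x))) := by
          gcongr
          exact ih (f x) (hs hx)
      _ = _ := by
          simp only [sum_range_succ' _ m, birkhoffSum_succ', Function.iterate_succ_apply,
            exp_add, birkhoffSum_zero, exp_zero, Nat.add_sub_add_right, Nat.sub_zero,
            Function.iterate_zero_apply, mul_add, mul_sum, one_mul, mul_assoc]
          ring

theorem sum_mul_le_of_le_geometric {w x : ℕ → ℝ} {A q : ℝ} {m n : ℕ} (hq0 : 0 ≤ q) (hq1 : q < 1)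
    (hA : 0 ≤ A) (hx : ∀ k, 0 ≤ x k) (hw : ∀ k, w k ≤ A) (hwx : ∀ k < m, w k * x k ≤ A * q ^ k)
    (hnm : n ≤ m) :
    ∑ k ∈ range m, w k * x k ≤ A * ∑ k ∈ range n, x k + A * (q ^ n / (1 - q)) := by
  rw [← sum_range_add_sum_Ico _ hnm, mul_sum]
  refine add_le_add (sum_le_sum fun k _ => ?_) ?_
  · exact mul_le_mul_of_nonneg_right (hw k) (hx k)
  · calc ∑ k ∈ Ico n m, w k * x k ≤ ∑ k ∈ Ico n m, A * q ^ k :=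
          sum_le_sum fun k hk => hwx k (mem_Ico.1 hk).2
      _ ≤ A * (q ^ n / (1 - q)) := by
          rw [← mul_sum]
          exact mul_le_mul_of_nonneg_left (geom_sum_Ico_le_of_lt_one hq0 hq1) hA

theorem exists_le_add_mul_of_tendsto_div {u : ℕ → ℝ} (hu : Tendsto (fun k => u k / k) atTop (𝓝 0))
    {ε : ℝ} (hε : 0 < ε) : ∃ C, ∀ k, u k ≤ C + ε * k := by
  obtain ⟨K, hK⟩ :=
    eventually_atTop.1 ((hu.eventually (gt_mem_nhds hε)).and (eventually_gt_atTop 0))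
  refine ⟨∑ i ∈ range K, |u i|, fun k => ?_⟩
  rcases lt_or_ge k K with hk | hk
  · have := single_le_sum (fun i _ => abs_nonneg (u i)) (mem_range.2 hk)
    nlinarith [le_abs_self (u k), (Nat.cast_nonneg k : (0 : ℝ) ≤ k)]
  · obtain ⟨hlt, hpos⟩ := hK k hk
    have := sum_nonneg fun i (_ : i ∈ range K) => abs_nonneg (u i)
    rw [div_lt_iff₀ (by exact_mod_cast hpos)] at hlt
    linarith

theorem AEMeasurable.birkhoffSum {α : Type*} [MeasurableSpace α] {μ : Measure α} {f : α → α}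
    {g : α → ℝ} (hf : Measure.QuasiMeasurePreserving f μ μ) (hg : AEMeasurable g μ) (n : ℕ) :
    AEMeasurable (birkhoffSum f g n) μ :=
  Finset.aemeasurable_fun_sum _ fun k _ => hg.comp_quasiMeasurePreserving (hf.iterate k)

theorem le_exp_max_log_zero (x : ℝ) : x ≤ exp (max (log x) 0) := by
  rcases le_or_gt x 0 with hx | hx
  · exact hx.trans (exp_pos _).le
  · exact (exp_log hx).symm.le.trans (exp_le_exp.2 (le_max_left _ _))

theorem Ergodic.ae_exists_geometric_bound {α : Type*} [MeasurableSpace α] {μ : Measure α}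
    [IsProbabilityMeasure μ] {f : α → α} {r b : α → ℝ} (hf : Ergodic f μ) (hr : Integrable r μ)
    (hneg : ∫ x, r x ∂μ < 0)
    (hb : ∀ᵐ x ∂μ, Tendsto (fun n : ℕ => max (log (b (f^[n] x))) 0 / n) atTop (𝓝 0)) :
    ∀ᵐ x ∂μ, ∃ A, ∀ k, exp (birkhoffSum f r k x) ≤ A * exp ((∫ x, r x ∂μ) / 4) ^ k ∧
      b (f^[k] x) * exp (birkhoffSum f r k x) ≤ A * exp ((∫ x, r x ∂μ) / 4) ^ k := by
  set c := ∫ x, r x ∂μ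
  filter_upwards [hf.ae_exists_birkhoffSum_le_add_mul hr (by linarith : c < c / 2), hb]
    with x ⟨C, hC⟩ hbx
  obtain ⟨C', hC'⟩ := exists_le_add_mul_of_tendsto_div hbx (by linarith : 0 < -c / 4)
  have hC'0 : 0 ≤ C' := by simpa using (le_max_right _ _).trans (hC' 0)
  refine ⟨exp (C + C'), fun k => ⟨?_, ?_⟩⟩
  · calc exp (birkhoffSum f r k x) ≤ exp (C + k * (c / 2)) := exp_le_exp.2 (hC k)
      _ ≤ exp (C + C') * exp (c / 4) ^ k := by
        rw [← exp_nat_mul, ← exp_add]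
        exact exp_le_exp.2 (by nlinarith [(Nat.cast_nonneg k : (0 : ℝ) ≤ k)])
  · calc b (f^[k] x) * exp (birkhoffSum f r k x)
        ≤ exp (C' + -c / 4 * k) * exp (C + k * (c / 2)) :=
          mul_le_mul ((le_exp_max_log_zero _).trans (exp_le_exp.2 (hC' k)))
            (exp_le_exp.2 (hC k)) (exp_pos _).le (exp_pos _).le
      _ = exp (C + C') * exp (c / 4) ^ k := by
        rw [← exp_nat_mul, ← exp_add, ← exp_add]
        ring_nf

theorem exists_aemeasurable_ae_le_mul_pow {α : Type*} [MeasurableSpace α] {μ : Measure α}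
    {u v : ℕ → α → ℝ} (hu : ∀ k, AEMeasurable (u k) μ) (hv : ∀ k, AEMeasurable (v k) μ)
    {q : ℝ} (hq : 0 < q) (h : ∀ᵐ x ∂μ, ∃ A, ∀ k, u k x ≤ A * q ^ k ∧ v k x ≤ A * q ^ k) :
    ∃ A : α → ℝ, AEMeasurable A μ ∧ ∀ᵐ x ∂μ, ∀ k, u k x ≤ A x * q ^ k ∧ v k x ≤ A x * q ^ k := by
  refine ⟨fun x => ⨆ k, max (u k x) (v k x) / q ^ k,
    AEMeasurable.iSup fun k => ((hu k).max (hv k)).div_const _, ?_⟩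
  filter_upwards [h] with x ⟨A, hA⟩ k
  have hbdd : BddAbove (Set.range fun k => max (u k x) (v k x) / q ^ k) :=
    ⟨A, Set.forall_mem_range.2 fun k =>
      (div_le_iff₀ (pow_pos hq k)).2 (max_le (hA k).1 (hA k).2)⟩
  have hk := (div_le_iff₀ (pow_pos hq k)).1 (le_ciSup hbdd k)
  exact ⟨(le_max_left _ _).trans hk, (le_max_right _ _).trans hk⟩

theorem tendstoInMeasure_of_ae_abs_le_geometric {α : Type*} [MeasurableSpace α] {μ : Measure α}
    [IsFiniteMeasure μ] {S : α → α} (hS : MeasurePreserving S μ μ) {N : ℕ → α → ℝ}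
    (hN_meas : ∀ m, Measurable (N m)) (hN : TendstoInMeasure μ N atTop 0) {Z A : α → ℝ}
    (hZ : Measurable Z) (hA : AEMeasurable A μ) {q : ℝ} (hq0 : 0 ≤ q) (hq1 : q < 1)
    {X : ℕ → α → ℝ} (hX : ∀ᵐ x ∂μ, ∀ n m, n ≤ m → |X m x| ≤
      A x * ∑ k ∈ range n, N (m - k) (S^[m] x) + A x * (q ^ n / (1 - q)) +
        A x * (Z (S^[m] x) * q ^ m)) :
    TendstoInMeasure μ X atTop 0 := by
  have hq := tendsto_pow_atTop_nhds_zero_of_lt_one hq0 hq1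
  have hNk : ∀ k, TendstoInMeasure μ (fun m x => N (m - k) (S^[m] x)) atTop 0 := fun k =>
    (tendstoInMeasure_comp_iff (fun m => hS.iterate m) fun m => hN_meas (m - k)).2
      (hN.comp (tendsto_sub_atTop_nat k))
  have hZq : TendstoInMeasure μ (fun m x => Z (S^[m] x) * q ^ m) atTop 0 :=
    (tendstoInMeasure_comp_iff (fun m => hS.iterate m) fun m => hZ.mul_const _).2
      ((tendstoInMeasure_const hq).mul_left hZ.aemeasurable)
  refine tendstoInMeasure_of_abs_le_add (V := fun n x => A x * (q ^ n / (1 - q)))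
    (U := fun n m x => A x * ∑ k ∈ range n, N (m - k) (S^[m] x) + A x * (Z (S^[m] x) * q ^ m))
    (fun n => ?_) ?_ fun n => ?_
  · have h := ((tendstoInMeasure_finset_sum (s := range n) fun k _ => hNk k).mul_left hA).add
      (hZq.mul_left hA)
    rw [add_zero] at h
    exact h
  · exact (tendstoInMeasure_const (by simpa using hq.div_const (1 - q))).mul_left hA
  · filter_upwards [eventually_ge_atTop n] with m hm
    filter_upwards [hX] with x hx
    refine (hx n m hm).trans ?_
    linarith [le_abs_self (A x * ∑ k ∈ range n, N (m - k) (S^[m] x) + A x * (Z (S^[m] x) * q ^ m)),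
      le_abs_self (A x * (q ^ n / (1 - q)))]

theorem ae_le_sum_exp_birkhoffSum {Ω : Type*} [MeasurableSpace Ω] {P : Measure Ω}
    {T S : Ω → Ω} (hTS : Function.LeftInverse T S) (hS : MeasurePreserving S P P)
    {R : Ω → ℝ} {d N : ℕ → Ω → ℝ}
    (hi : ∀ m : ℕ, 1 ≤ m → ∀ᵐ ω ∂P, d m ω ≤ N m ω + exp (R (T^[m - 1] ω)) * d (m - 1) ω) :
    ∀ᵐ ω ∂P, ∀ m, d m (S^[m] ω) ≤
      ∑ k ∈ range m, exp (birkhoffSum S (R ∘ S) k ω) * N (m - k) (S^[m] ω) +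
        exp (birkhoffSum S (R ∘ S) m ω) * d 0 (S^[m] ω) := by
  set s := {ω | ∀ j m, d (m + 1) (S^[j] ω) ≤
    N (m + 1) (S^[j] ω) + exp (R (T^[m] (S^[j] ω))) * d m (S^[j] ω)}
  have hs : ∀ᵐ ω ∂P, ω ∈ s := ae_all_iff.2 fun j => ae_all_iff.2 fun m =>
    (hS.iterate j).quasiMeasurePreserving.ae (hi (m + 1) m.succ_pos)
  have hmaps : Set.MapsTo S s s := fun ω hω j => hω (j + 1)
  have hunroll := le_sum_exp_birkhoffSum_mul (e := fun m ω => d m (S^[m] ω))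
    (u := fun m ω => N m (S^[m] ω)) (r := R ∘ S) hmaps fun m ω hω => by
      have h := hω (m + 1) m
      rwa [Function.iterate_succ_apply, hTS.iterate m (S ω)] at h
  filter_upwards [hs] with ω hω m
  refine (hunroll m ω hω).trans_eq (congrArg (· + _) (sum_congr rfl fun k hk => ?_))
  rw [← Function.iterate_add_apply, Nat.sub_add_cancel (mem_range.1 hk).le]

theorem sum_exp_mul_add_exp_mul_le {Ω : Type*} {T S : Ω → Ω} (hTS : Function.LeftInverse T S)
    {N : ℕ → Ω → ℝ} {b : Ω → ℝ} (hN_nonneg : ∀ m ω, 0 ≤ N m ω)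
    (hii : ∀ m ω, N m ω ≤ b (T^[m] ω)) {B : ℕ → ℝ} {A q z : ℝ} {ω : Ω} (hq0 : 0 ≤ q)
    (hq1 : q < 1) (hgeom : ∀ k, exp (B k) ≤ A * q ^ k ∧ b (S^[k] ω) * exp (B k) ≤ A * q ^ k)
    (hz : 0 ≤ z) {n m : ℕ} (hnm : n ≤ m) :
    ∑ k ∈ range m, exp (B k) * N (m - k) (S^[m] ω) + exp (B m) * z ≤
      A * ∑ k ∈ range n, N (m - k) (S^[m] ω) + A * (q ^ n / (1 - q)) + A * (z * q ^ m) := by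
  have hA : 0 ≤ A := by simpa using (exp_pos (B 0)).le.trans (hgeom 0).1
  have hNb : ∀ k < m, N (m - k) (S^[m] ω) ≤ b (S^[k] ω) := fun k hk =>
    calc N (m - k) (S^[m] ω) ≤ b (T^[m - k] (S^[m] ω)) := hii _ _
      _ = b (S^[k] ω) := by
        rw [← Nat.sub_add_cancel hk.le, Function.iterate_add_apply, Nat.add_sub_cancel,
          hTS.iterate]
  refine add_le_add (sum_mul_le_of_le_geometric hq0 hq1 hA (fun k => hN_nonneg _ _)
    (fun k => (hgeom k).1.trans (mul_le_of_le_one_right hA (pow_le_one₀ hq0 hq1.le)))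
    (fun k hk => ?_) hnm) ?_
  · calc exp (B k) * N (m - k) (S^[m] ω) ≤ b (S^[k] ω) * exp (B k) := by
          rw [mul_comm]; exact mul_le_mul_of_nonneg_right (hNb k hk) (exp_pos _).le
      _ ≤ A * q ^ k := (hgeom k).2
  · rw [mul_comm z, ← mul_assoc]
    exact mul_le_mul_of_nonneg_right (hgeom m).1 hz

theorem stmt_5_general {Ω : Type*} [MeasurableSpace Ω] (P : Measure Ω) [IsProbabilityMeasure P]
    (T S : Ω → Ω) (hST : ∀ ω, S (T ω) = ω) (hTS : ∀ ω, T (S ω) = ω)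
    (hT : Ergodic T P) (hS : MeasurePreserving S P P)
    (R : Ω → ℝ) (hR : Integrable R P) (hER : ∫ ω, R ω ∂P < 0)
    (b : Ω → ℝ) (hb_meas : Measurable b)
    (hb_temp : ∀ᵐ ω ∂P,
      Tendsto (fun n : ℕ => max (Real.log (b (T^[n] ω))) 0 / (n : ℝ)) atTop (nhds 0) ∧
      Tendsto (fun n : ℕ => max (Real.log (b (S^[n] ω))) 0 / (n : ℝ)) atTop (nhds 0))
    (d N : ℕ → Ω → ℝ)
    (hd_meas : ∀ m, Measurable (d m)) (hN_meas : ∀ m, Measurable (N m))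
    (hd_nonneg : ∀ m ω, 0 ≤ d m ω) (hN_nonneg : ∀ m ω, 0 ≤ N m ω)
    (hi : ∀ m : ℕ, 1 ≤ m → ∀ᵐ ω ∂P,
      d m ω ≤ N m ω + Real.exp (R (T^[m - 1] ω)) * d (m - 1) ω)
    (hii : ∀ m ω, N m ω ≤ b (T^[m] ω))
    (hiii : ∀ δ : ℝ, 0 < δ →
      Tendsto (fun m : ℕ => P {ω | δ ≤ N m ω}) atTop (nhds 0)) :
    ∀ δ : ℝ, 0 < δ →
      Tendsto (fun m : ℕ => P {ω | δ ≤ d m ω}) atTop (nhds 0) := by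
  let e : Ω ≃ᵐ Ω := ⟨⟨T, S, hST, hTS⟩, hT.measurable, hS.measurable⟩
  have hSerg : Ergodic S P := Ergodic.symm (e := e) hT
  have hRS : Integrable (R ∘ S) P := hS.integrable_comp_of_integrable hR
  have hERS : ∫ ω, (R ∘ S) ω ∂P < 0 :=
    (MeasurePreserving.integral_comp' (f := e.symm) hS R).trans_lt hER
  have hq1 : exp ((∫ ω, (R ∘ S) ω ∂P) / 4) < 1 := exp_lt_one_iff.2 (by linarith)
  have hB : ∀ k, AEMeasurable (birkhoffSum S (R ∘ S) k) P :=
    AEMeasurable.birkhoffSum hS.quasiMeasurePreserving hRS.aemeasurable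
  obtain ⟨A, hA, hgeom⟩ := exists_aemeasurable_ae_le_mul_pow (fun k => (hB k).exp)
    (fun k => (hb_meas.comp (hS.measurable.iterate k)).aemeasurable.mul (hB k).exp) (exp_pos _)
    (hSerg.ae_exists_geometric_bound hRS hERS (hb_temp.mono fun _ h => h.2))
  have hX : TendstoInMeasure P (fun m ω => d m (S^[m] ω)) atTop 0 := by
    refine tendstoInMeasure_of_ae_abs_le_geometric hS hN_meas
      ((tendstoInMeasure_zero_iff_of_nonneg hN_nonneg).2 hiii) (hd_meas 0) hA (exp_pos _).le hq1 ?_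
    filter_upwards [ae_le_sum_exp_birkhoffSum hTS hS hi, hgeom] with ω hunroll hgeom n m hnm
    rw [abs_of_nonneg (hd_nonneg _ _)]
    exact (hunroll m).trans (sum_exp_mul_add_exp_mul_le hTS hN_nonneg hii (exp_pos _).le hq1 hgeom
      (hd_nonneg 0 _) hnm)
  exact (tendstoInMeasure_zero_iff_of_nonneg hd_nonneg).1
    ((tendstoInMeasure_comp_iff (fun m => hS.iterate m) hd_meas).1 hX)

/-- Let `(Ω, F, P)` be a probability space and `T : Ω → Ω` invertible (with inverse `S`),
both `T` and `S` measurable and measure-preserving, `T` ergodic. Let `R : Ω → ℝ` be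
integrable with `E[R] < 0` and `b : Ω → [0,∞)` measurable and tempered. Let
`d m, N m : Ω → [0,∞)` be measurable with (i) for every `m ≥ 1`, a.s.
`d m ω ≤ N m ω + exp (R (T^[m−1] ω)) · d (m−1) ω`; (ii) `N m ω ≤ b (T^[m] ω)`;
(iii) `N m → 0` in probability. Then `d m → 0` in probability. -/
theorem stmt_5 {Ω : Type*} [MeasurableSpace Ω] (P : Measure Ω) [IsProbabilityMeasure P]
    (T S : Ω → Ω) (hST : ∀ ω, S (T ω) = ω) (hTS : ∀ ω, T (S ω) = ω)
    (hT : Ergodic T P) (hS : MeasurePreserving S P P)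
    (R : Ω → ℝ) (hR : Integrable R P) (hER : ∫ ω, R ω ∂P < 0)
    (b : Ω → ℝ) (hb_meas : Measurable b) (hb_nonneg : ∀ ω, 0 ≤ b ω)
    (hb_temp : ∀ᵐ ω ∂P,
      Tendsto (fun n : ℕ => max (Real.log (b (T^[n] ω))) 0 / (n : ℝ)) atTop (nhds 0) ∧
      Tendsto (fun n : ℕ => max (Real.log (b (S^[n] ω))) 0 / (n : ℝ)) atTop (nhds 0))
    (d N : ℕ → Ω → ℝ)
    (hd_meas : ∀ m, Measurable (d m)) (hN_meas : ∀ m, Measurable (N m))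
    (hd_nonneg : ∀ m ω, 0 ≤ d m ω) (hN_nonneg : ∀ m ω, 0 ≤ N m ω)
    (hi : ∀ m : ℕ, 1 ≤ m → ∀ᵐ ω ∂P,
      d m ω ≤ N m ω + Real.exp (R (T^[m - 1] ω)) * d (m - 1) ω)
    (hii : ∀ m ω, N m ω ≤ b (T^[m] ω))
    (hiii : ∀ δ : ℝ, 0 < δ →
      Tendsto (fun m : ℕ => P {ω | δ ≤ N m ω}) atTop (nhds 0)) :
    ∀ δ : ℝ, 0 < δ →
      Tendsto (fun m : ℕ => P {ω | δ ≤ d m ω}) atTop (nhds 0) :=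
  stmt_5_general P T S hST hTS hT hS R hR hER b hb_meas hb_temp d N hd_meas hN_meas hd_nonneg
    hN_nonneg hi hii hiii
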